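/- Let μ ∈ V_n and suppose Ric_μ is a derivation of (ℝⁿ,μ). Then Ric_μ = 0, and consequently μ = 0. -/

import Mathlib

open Matrix BigOperators

noncomputable section

/-- An element of `V_n`: a skew-symmetric bilinear map `μ : ℝⁿ × ℝⁿ → ℝⁿ`. -/
def IsSkewBil {n : ℕ} (μ : (Fin n → ℝ) → (Fin n → ℝ) → (Fin n → ℝ)) : Prop :=
  (∀ x, IsLinearMap ℝ (μ x)) ∧ (∀ y, IsLinearMap ℝ (fun x => μ x y)) ∧
  (∀ x y, μ x y = - μ y x)

/-- The matrix of `ad_μ x : y ↦ μ(x,y)` in the canonical basis. -/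
def adMat {n : ℕ} (μ : (Fin n → ℝ) → (Fin n → ℝ) → (Fin n → ℝ)) (x : Fin n → ℝ) :
    Matrix (Fin n) (Fin n) ℝ := fun i j => μ x (Pi.single j 1) i

/-- The Ricci operator `Ric_μ = -½ Σᵢ (ad_μ eᵢ)ᵀ(ad_μ eᵢ) + ¼ Σᵢ (ad_μ eᵢ)(ad_μ eᵢ)ᵀ`. -/
def Ric {n : ℕ} (μ : (Fin n → ℝ) → (Fin n → ℝ) → (Fin n → ℝ)) :
    Matrix (Fin n) (Fin n) ℝ :=
  (-(1/2 : ℝ)) • ∑ i, (adMat μ (Pi.single i 1))ᵀ * adMat μ (Pi.single i 1)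
  + (1/4 : ℝ) • ∑ i, adMat μ (Pi.single i 1) * (adMat μ (Pi.single i 1))ᵀ

/-- `δ_μ(α)(x,y) = μ(αx,y) + μ(x,αy) - αμ(x,y)`. -/
def deltaMap {n : ℕ} (μ : (Fin n → ℝ) → (Fin n → ℝ) → (Fin n → ℝ))
    (A : Matrix (Fin n) (Fin n) ℝ) : (Fin n → ℝ) → (Fin n → ℝ) → (Fin n → ℝ) :=
  fun x y => μ (A.mulVec x) y + μ x (A.mulVec y) - A.mulVec (μ x y)

/-- The inner product `⟨μ,ν⟩ = Σ_{i,j} ⟨μ(eᵢ,eⱼ), ν(eᵢ,eⱼ)⟩` on `V_n`. -/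
def innV {n : ℕ} (μ ν : (Fin n → ℝ) → (Fin n → ℝ) → (Fin n → ℝ)) : ℝ :=
  ∑ i, ∑ j, ∑ k,
    μ (Pi.single i 1) (Pi.single j 1) k * ν (Pi.single i 1) (Pi.single j 1) k

/-- `D` is a derivation of the algebra `(ℝⁿ, μ)`. -/
def IsDeriv {n : ℕ} (μ : (Fin n → ℝ) → (Fin n → ℝ) → (Fin n → ℝ))
    (D : Matrix (Fin n) (Fin n) ℝ) : Prop :=
  ∀ x y, D.mulVec (μ x y) = μ (D.mulVec x) y + μ x (D.mulVec y)

/-- The Jacobi identity. -/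
def IsJacobi {n : ℕ} (μ : (Fin n → ℝ) → (Fin n → ℝ) → (Fin n → ℝ)) : Prop :=
  ∀ x y z, μ x (μ y z) + μ y (μ z x) + μ z (μ x y) = 0

/-- `μ` is a nilpotent Lie bracket on `ℝⁿ`. -/
def IsNilBracket {n : ℕ} (μ : (Fin n → ℝ) → (Fin n → ℝ) → (Fin n → ℝ)) : Prop :=
  IsSkewBil μ ∧ IsJacobi μ ∧ ∀ x, IsNilpotent (adMat μ x)

/-!
For every matrix `D` one has `⟨δ_μ(D), μ⟩ = -4 tr(Ric_μ D)`: written through the matrices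
`A_i = ad_μ eᵢ`, the terms `μ(·, D·)` and (by skew-symmetry) `μ(D·, ·)` of `δ_μ(D)` each contribute
`Σᵢ tr(A_iᵀ A_i D)`, and `-Dμ` contributes `-Σᵢ tr(A_i A_iᵀ D)`. A derivation `D` has `δ_μ(D) = 0`,
so `tr(Ric_μ D) = 0`; for `D = Ric_μ`, which is symmetric, this is `‖Ric_μ‖² = 0`. Then
`‖μ‖² = -4 tr(Ric_μ) = 0`.
-/

theorem trace_transpose_mul_mul_self {m R : Type*} [Fintype m] [CommRing R]
    (A D : Matrix m m R) : ((A * D)ᵀ * A).trace = (Aᵀ * A * D).trace := by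
  rw [← Matrix.trace_transpose, Matrix.transpose_mul, Matrix.transpose_transpose, Matrix.mul_assoc]

theorem trace_mul_transpose_mul_self {m R : Type*} [Fintype m] [CommRing R]
    (A D : Matrix m m R) : ((D * A)ᵀ * A).trace = (A * Aᵀ * D).trace := by
  rw [Matrix.transpose_mul, Matrix.mul_assoc, Matrix.trace_mul_comm, Matrix.mul_assoc,
    ← Matrix.trace_transpose, Matrix.transpose_mul, Matrix.transpose_mul,
    Matrix.transpose_transpose, Matrix.transpose_transpose]

section

variable {n : ℕ} {μ : (Fin n → ℝ) → (Fin n → ℝ) → (Fin n → ℝ)}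

namespace IsSkewBil

def toLinearMap₂ (hμ : IsSkewBil μ) : (Fin n → ℝ) →ₗ[ℝ] (Fin n → ℝ) →ₗ[ℝ] (Fin n → ℝ) :=
  LinearMap.mk₂ ℝ μ (fun x₁ x₂ y => (hμ.2.1 y).map_add x₁ x₂)
    (fun c x y => (hμ.2.1 y).map_smul c x) (fun x y₁ y₂ => (hμ.1 x).map_add y₁ y₂)
    (fun c x y => (hμ.1 x).map_smul c y)

@[simp]
theorem toLinearMap₂_apply (hμ : IsSkewBil μ) (x y : Fin n → ℝ) :
    hμ.toLinearMap₂ x y = μ x y :=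
  rfl

theorem adMat_comp_mulVec (hμ : IsSkewBil μ) (D : Matrix (Fin n) (Fin n) ℝ) (x : Fin n → ℝ) :
    adMat (fun x y => μ x (D *ᵥ y)) x = adMat μ x * D :=
  calc adMat (fun x y => μ x (D *ᵥ y)) x = LinearMap.toMatrix' (hμ.toLinearMap₂ x ∘ₗ toLin' D) :=
        rfl
    _ = adMat μ x * D := by rw [LinearMap.toMatrix'_comp, LinearMap.toMatrix'_toLin']; rfl

theorem eq_zero_of_adMat_eq_zero (hμ : IsSkewBil μ) (h : ∀ i, adMat μ (Pi.single i 1) = 0) :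
    μ = fun _ _ => 0 := by
  have h₂ : hμ.toLinearMap₂ = 0 := LinearMap.ext_basis (Pi.basisFun ℝ _) (Pi.basisFun ℝ _)
    fun i j => funext fun k => by simpa [adMat] using congrFun (congrFun (h i) k) j
  funext x y
  exact LinearMap.congr_fun₂ h₂ x y

end IsSkewBil

variable (μ) in
theorem adMat_mulVec_comp (D : Matrix (Fin n) (Fin n) ℝ) (x : Fin n → ℝ) :
    adMat (fun x y => D *ᵥ μ x y) x = D * adMat μ x := by
  ext i j
  simp [adMat, Matrix.mul_apply, Matrix.mulVec, dotProduct]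

theorem innV_eq_sum_trace (ν : (Fin n → ℝ) → (Fin n → ℝ) → (Fin n → ℝ)) :
    innV ν μ = ∑ i, ((adMat ν (Pi.single i 1))ᵀ * adMat μ (Pi.single i 1)).trace := by
  simp only [innV, Matrix.trace, Matrix.diag, Matrix.mul_apply, Matrix.transpose_apply, adMat]

theorem innV_mulVec_left_eq_right (hμ : IsSkewBil μ) (D : Matrix (Fin n) (Fin n) ℝ) :
    innV (fun x y => μ (D *ᵥ x) y) μ = innV (fun x y => μ x (D *ᵥ y)) μ := by
  unfold innV
  rw [Finset.sum_comm]
  refine Finset.sum_congr rfl fun i _ => Finset.sum_congr rfl fun j _ =>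
    Finset.sum_congr rfl fun k _ => ?_
  dsimp only
  rw [hμ.2.2 (D *ᵥ _), hμ.2.2 (Pi.single j 1), Pi.neg_apply, Pi.neg_apply, neg_mul_neg]

theorem innV_deltaMap_self (hμ : IsSkewBil μ) (D : Matrix (Fin n) (Fin n) ℝ) :
    innV (deltaMap μ D) μ = -4 * (Ric μ * D).trace := by
  have hsplit : innV (deltaMap μ D) μ = innV (fun x y => μ (D *ᵥ x) y) μ
      + innV (fun x y => μ x (D *ᵥ y)) μ - innV (fun x y => D *ᵥ μ x y) μ := by
    simp only [innV, deltaMap, Pi.add_apply, Pi.sub_apply, add_mul, sub_mul,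
      Finset.sum_add_distrib, Finset.sum_sub_distrib]
  rw [hsplit, innV_mulVec_left_eq_right hμ]
  simp only [innV_eq_sum_trace, hμ.adMat_comp_mulVec, adMat_mulVec_comp,
    trace_transpose_mul_mul_self, trace_mul_transpose_mul_self, Ric, Matrix.add_mul,
    Matrix.smul_mul, Matrix.sum_mul, Matrix.trace_add, Matrix.trace_smul, Matrix.trace_sum,
    smul_eq_mul]
  ring

theorem trace_Ric_mul_eq_zero_of_isDeriv (hμ : IsSkewBil μ) {D : Matrix (Fin n) (Fin n) ℝ}
    (hD : IsDeriv μ D) : (Ric μ * D).trace = 0 := by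
  have hδ : deltaMap μ D = fun _ _ => 0 := funext₂ fun x y => sub_eq_zero.mpr (hD x y).symm
  have h0 : innV (deltaMap μ D) μ = 0 := by simp [hδ, innV]
  linarith [innV_deltaMap_self hμ D]

variable (μ) in
theorem Ric_transpose : (Ric μ)ᵀ = Ric μ := by
  simp [Ric, Matrix.transpose_sum, Matrix.transpose_mul]

theorem Ric_eq_zero_of_isDeriv_Ric (hμ : IsSkewBil μ) (h : IsDeriv μ (Ric μ)) : Ric μ = 0 := by
  rw [← Matrix.trace_conjTranspose_mul_self_eq_zero_iff,
    Matrix.conjTranspose_eq_transpose_of_trivial, Ric_transpose]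
  exact trace_Ric_mul_eq_zero_of_isDeriv hμ h

variable (μ) in
theorem trace_Ric : (Ric μ).trace = -(1 / 4) * innV μ μ := by
  simp only [Ric, innV_eq_sum_trace, Matrix.trace_add, Matrix.trace_smul, Matrix.trace_sum,
    Matrix.trace_mul_comm _ (adMat μ _)ᵀ, smul_eq_mul]
  ring

theorem eq_zero_of_innV_self_eq_zero (hμ : IsSkewBil μ) (h : innV μ μ = 0) :
    μ = fun _ _ => 0 := by
  have hnonneg (A : Matrix (Fin n) (Fin n) ℝ) : 0 ≤ (Aᵀ * A).trace := by
    simpa using (Matrix.posSemidef_conjTranspose_mul_self A).trace_nonneg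
  rw [innV_eq_sum_trace, Finset.sum_eq_zero_iff_of_nonneg fun i _ => hnonneg _] at h
  refine hμ.eq_zero_of_adMat_eq_zero fun i => ?_
  rw [← Matrix.trace_conjTranspose_mul_self_eq_zero_iff,
    Matrix.conjTranspose_eq_transpose_of_trivial]
  exact h i (Finset.mem_univ i)

end

/-- if `Ric_μ` is a derivation of `(ℝⁿ,μ)` then `Ric_μ = 0` and `μ = 0`. -/
theorem stmt6 {n : ℕ} (μ : (Fin n → ℝ) → (Fin n → ℝ) → (Fin n → ℝ))
    (hμ : IsSkewBil μ) (h : IsDeriv μ (Ric μ)) :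
    Ric μ = 0 ∧ μ = (fun _ _ => 0) := by
  have hRic : Ric μ = 0 := Ric_eq_zero_of_isDeriv_Ric hμ h
  refine ⟨hRic, eq_zero_of_innV_self_eq_zero hμ ?_⟩
  have htrace := trace_Ric μ
  rw [hRic, Matrix.trace_zero] at htrace
  linarith
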